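/- Assume a₁₁, a₂₂, a₁₂, a are continuous on [−1,1]² with a₁₁ > 0, a₂₂ > 0, a ≥ 0, a₁₂(x,y) < 0 for every (x,y), and |a₁₂(x,y)| < min(a₁₁(x,y), a₂₂(x,y)) for every (x,y) ∈ [−1,1]². Write the combined operator at an interior node as (L_h⁰ v + L_h⁻ v)(x,y) = Σ_{p,q ∈ {−1,0,1}} c_{p,q}(x,y;h) v(x+ph, y+qh). Then there exists h₀ > 0 such that for every even N with h = 2/N < h₀ and every interior node (x,y): c_{p,q}(x,y;h) ≥ 0 for all (p,q) ≠ (0,0), and c_{0,0}(x,y;h) < 0. -/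
import Mathlib


open Set

noncomputable section

/-- The closed square `[-1,1]²` as a subset of `ℝ × ℝ`. -/
def Q2 : Set (ℝ × ℝ) := Set.Icc ((-1 : ℝ), (-1 : ℝ)) (1, 1)

/-- Grid node `(x_i, y_j) = (-1 + i h, -1 + j h)` with `h = 2/N`. -/
def nodePt (N i j : ℕ) : ℝ × ℝ := (-1 + i * (2 / (N : ℝ)), -1 + j * (2 / (N : ℝ)))

/-- The stencil point at offset `(p,q)` from `z`. -/
def shiftPt (z : ℝ × ℝ) (h : ℝ) (p q : ℤ) : ℝ × ℝ := (z.1 + (p : ℝ) * h, z.2 + (q : ℝ) * h)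

/-- The five-point operator `L_h⁰`. -/
def Lh0 (a11 a22 a : ℝ × ℝ → ℝ) (h : ℝ) (v : ℝ × ℝ → ℝ) (z : ℝ × ℝ) : ℝ :=
  (a11 (z.1 - h / 2, z.2) * v (z.1 - h, z.2) + a11 (z.1 + h / 2, z.2) * v (z.1 + h, z.2)
    + a22 (z.1, z.2 - h / 2) * v (z.1, z.2 - h) + a22 (z.1, z.2 + h / 2) * v (z.1, z.2 + h)
    - (a11 (z.1 - h / 2, z.2) + a11 (z.1 + h / 2, z.2)
        + a22 (z.1, z.2 - h / 2) + a22 (z.1, z.2 + h / 2)) * v z) / h ^ 2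
  - a z * v z

/-- The mixed-term operator `L_h⁻` (designed for negative `a₁₂`). -/
def Lhm (a12 : ℝ × ℝ → ℝ) (h : ℝ) (v : ℝ × ℝ → ℝ) (z : ℝ × ℝ) : ℝ :=
  (1 / (2 * h ^ 2)) *
    (-(a12 (z.1 - h / 2, z.2 + h) + a12 (z.1 - h, z.2 + h / 2)) * v (z.1 - h, z.2 + h)
      + (a12 (z.1 - h / 2, z.2 + h) + a12 (z.1, z.2 + h / 2)) * v (z.1, z.2 + h)
      + (a12 (z.1 - h, z.2 + h / 2) + a12 (z.1 - h / 2, z.2)) * v (z.1 - h, z.2)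
      - (a12 (z.1, z.2 + h / 2) + a12 (z.1 - h / 2, z.2)
          + a12 (z.1, z.2 - h / 2) + a12 (z.1 + h / 2, z.2)) * v z
      + (a12 (z.1 + h, z.2 - h / 2) + a12 (z.1 + h / 2, z.2)) * v (z.1 + h, z.2)
      + (a12 (z.1, z.2 - h / 2) + a12 (z.1 + h / 2, z.2 - h)) * v (z.1, z.2 - h)
      - (a12 (z.1 + h, z.2 - h / 2) + a12 (z.1 + h / 2, z.2 - h)) * v (z.1 + h, z.2 - h))

/-- The coefficient of `v(x+ph, y+qh)` in the five-point operator `L_h⁰` at `z = (x,y)`. -/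
def diagCoef (a11 a22 a : ℝ × ℝ → ℝ) (h : ℝ) (z : ℝ × ℝ) (p q : ℤ) : ℝ :=
  if p = -1 ∧ q = 0 then a11 (z.1 - h / 2, z.2) / h ^ 2
  else if p = 1 ∧ q = 0 then a11 (z.1 + h / 2, z.2) / h ^ 2
  else if p = 0 ∧ q = -1 then a22 (z.1, z.2 - h / 2) / h ^ 2
  else if p = 0 ∧ q = 1 then a22 (z.1, z.2 + h / 2) / h ^ 2
  else if p = 0 ∧ q = 0 then
    -(a11 (z.1 - h / 2, z.2) + a11 (z.1 + h / 2, z.2)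
        + a22 (z.1, z.2 - h / 2) + a22 (z.1, z.2 + h / 2)) / h ^ 2 - a z
  else 0

/-- The coefficient of `v(x+ph, y+qh)` in the mixed-term operator `L_h⁻` at `z = (x,y)`. -/
def mixedNegCoef (a12 : ℝ × ℝ → ℝ) (h : ℝ) (z : ℝ × ℝ) (p q : ℤ) : ℝ :=
  (if p = -1 ∧ q = 1 then -(a12 (z.1 - h / 2, z.2 + h) + a12 (z.1 - h, z.2 + h / 2))
   else if p = 0 ∧ q = 1 then a12 (z.1 - h / 2, z.2 + h) + a12 (z.1, z.2 + h / 2)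
   else if p = -1 ∧ q = 0 then a12 (z.1 - h, z.2 + h / 2) + a12 (z.1 - h / 2, z.2)
   else if p = 0 ∧ q = 0 then
     -(a12 (z.1, z.2 + h / 2) + a12 (z.1 - h / 2, z.2)
         + a12 (z.1, z.2 - h / 2) + a12 (z.1 + h / 2, z.2))
   else if p = 1 ∧ q = 0 then a12 (z.1 + h, z.2 - h / 2) + a12 (z.1 + h / 2, z.2)
   else if p = 0 ∧ q = -1 then a12 (z.1, z.2 - h / 2) + a12 (z.1 + h / 2, z.2 - h)
   else if p = 1 ∧ q = -1 then -(a12 (z.1 + h, z.2 - h / 2) + a12 (z.1 + h / 2, z.2 - h))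
   else 0) / (2 * h ^ 2)

/-- The coefficient `c_{p,q}(x,y;h)` of the combined operator `L_h⁰ + L_h⁻`. -/
def negStencilCoef (a11 a22 a12 a : ℝ × ℝ → ℝ) (h : ℝ) (z : ℝ × ℝ) (p q : ℤ) : ℝ :=
  diagCoef a11 a22 a h z p q + mixedNegCoef a12 h z p q

lemma memQ2' {u w : ℝ} (h1 : -1 ≤ u) (h2 : u ≤ 1) (h3 : -1 ≤ w) (h4 : w ≤ 1) :
    (u, w) ∈ Q2 := ⟨⟨h1, h3⟩, ⟨h2, h4⟩⟩

lemma stencil_repr (a11 a22 a12 a : ℝ × ℝ → ℝ) (h : ℝ) (z : ℝ × ℝ) (v : ℝ × ℝ → ℝ) :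
    Lh0 a11 a22 a h v z + Lhm a12 h v z
      = ∑ p ∈ Finset.Icc (-1 : ℤ) 1, ∑ q ∈ Finset.Icc (-1 : ℤ) 1,
          negStencilCoef a11 a22 a12 a h z p q * v (shiftPt z h p q) := by
  rw [show (Finset.Icc (-1:ℤ) 1) = {-1,0,1} by decide]
  simp only [Finset.sum_insert, Finset.mem_insert, Finset.mem_singleton,
    Finset.sum_singleton, negStencilCoef, diagCoef, mixedNegCoef, shiftPt, Lh0, Lhm]
  norm_num [Prod.mk.eta, sub_eq_add_neg]
  ring

lemma node_signs (a11 a22 a12 a : ℝ × ℝ → ℝ)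
    (ha11pos : ∀ z ∈ Q2, 0 < a11 z) (ha22pos : ∀ z ∈ Q2, 0 < a22 z)
    (ha0 : ∀ z ∈ Q2, 0 ≤ a z) (ha12neg : ∀ z ∈ Q2, a12 z < 0)
    (hdom : ∀ z ∈ Q2, |a12 z| < min (a11 z) (a22 z))
    (h δ ε : ℝ) (hh : 0 < h) (hhδ : h < δ)
    (hmin : ∀ z ∈ Q2, ε ≤ min (a11 z) (a22 z) + a12 z)
    (hδ : ∀ z ∈ Q2, ∀ w ∈ Q2, dist z w < δ → |a12 z - a12 w| < ε)
    (x y : ℝ) (hx1 : -1 ≤ x - h) (hx2 : x + h ≤ 1)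
    (hy1 : -1 ≤ y - h) (hy2 : y + h ≤ 1) :
    (∀ p ∈ Finset.Icc (-1 : ℤ) 1, ∀ q ∈ Finset.Icc (-1 : ℤ) 1, ¬(p = 0 ∧ q = 0) →
        0 ≤ negStencilCoef a11 a22 a12 a h (x, y) p q) ∧
      negStencilCoef a11 a22 a12 a h (x, y) 0 0 < 0 := by
  have memP : ∀ u w : ℝ, x - h ≤ u → u ≤ x + h → y - h ≤ w → w ≤ y + h → (u, w) ∈ Q2 :=
    fun u w h1 h2 h3 h4 => memQ2' (by linarith) (by linarith) (by linarith) (by linarith)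
  have hdist : ∀ u w u' w' : ℝ, |u' - u| ≤ h/2 → |w' - w| ≤ h/2 →
      dist ((u',w') : ℝ × ℝ) ((u,w) : ℝ × ℝ) < δ := by
    intro u w u' w' h1 h2
    rw [Prod.dist_eq]
    have hhδ2 : h/2 < δ := by linarith
    exact max_lt (by simp only [Real.dist_eq]; linarith)
      (by simp only [Real.dist_eq]; linarith)
  have key : ∀ z₁ z₂ : ℝ × ℝ, z₁ ∈ Q2 → z₂ ∈ Q2 → dist z₂ z₁ < δ →
      0 ≤ 2 * min (a11 z₁) (a22 z₁) + (a12 z₂ + a12 z₁) := by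
    intro z₁ z₂ m1 m2 hd
    have h1 := hmin z₁ m1
    have h2 := hδ z₂ m2 z₁ m1 hd
    obtain ⟨hl, hr⟩ := abs_lt.mp h2
    linarith
  have pair : ∀ A : ℝ, ∀ z₁ z₂ : ℝ × ℝ, z₁ ∈ Q2 → z₂ ∈ Q2 → dist z₂ z₁ < δ →
      min (a11 z₁) (a22 z₁) ≤ A → 0 ≤ (2 * A + (a12 z₂ + a12 z₁)) / (2 * h^2) := by
    intro A z₁ z₂ m1 m2 hd hmin'
    have hk := key z₁ z₂ m1 m2 hd
    apply div_nonneg (by linarith) (by positivity)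
  constructor
  · intro p hp q hq hpq
    rw [Finset.mem_Icc] at hp hq
    obtain ⟨hp1, hp2⟩ := hp; obtain ⟨hq1, hq2⟩ := hq
    interval_cases p <;> interval_cases q
    · -- (-1,-1)
      norm_num [negStencilCoef, diagCoef, mixedNegCoef]
    · -- (-1,0)
      have heq : negStencilCoef a11 a22 a12 a h (x,y) (-1) 0
          = (2 * a11 (x - h/2, y) + (a12 (x - h, y + h/2) + a12 (x - h/2, y))) / (2*h^2) := by
        norm_num [negStencilCoef, diagCoef, mixedNegCoef]
        field_simp
      rw [heq]
      exact pair _ _ _ (memP _ _ (by linarith) (by linarith) (by linarith) (by linarith))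
        (memP _ _ (by linarith) (by linarith) (by linarith) (by linarith))
        (hdist _ _ _ _ (by rw [abs_le]; constructor <;> linarith)
          (by rw [abs_le]; constructor <;> linarith)) (min_le_left _ _)
    · -- (-1,1)
      have heq : negStencilCoef a11 a22 a12 a h (x,y) (-1) 1
          = -(a12 (x - h/2, y + h) + a12 (x - h, y + h/2)) / (2*h^2) := by
        norm_num [negStencilCoef, diagCoef, mixedNegCoef]
      rw [heq]
      have n1 := ha12neg _ (memP (x - h/2) (y + h) (by linarith) (by linarith) (by linarith) (by linarith))
      have n2 := ha12neg _ (memP (x - h) (y + h/2) (by linarith) (by linarith) (by linarith) (by linarith))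
      apply div_nonneg (by linarith) (by positivity)
    · -- (0,-1)
      have heq : negStencilCoef a11 a22 a12 a h (x,y) 0 (-1)
          = (2 * a22 (x, y - h/2) + (a12 (x + h/2, y - h) + a12 (x, y - h/2))) / (2*h^2) := by
        norm_num [negStencilCoef, diagCoef, mixedNegCoef]
        field_simp
        ring
      rw [heq]
      exact pair _ _ _ (memP _ _ (by linarith) (by linarith) (by linarith) (by linarith))
        (memP _ _ (by linarith) (by linarith) (by linarith) (by linarith))
        (hdist _ _ _ _ (by rw [abs_le]; constructor <;> linarith)
          (by rw [abs_le]; constructor <;> linarith)) (min_le_right _ _)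
    · -- (0,0)
      exact absurd ⟨rfl, rfl⟩ hpq
    · -- (0,1)
      have heq : negStencilCoef a11 a22 a12 a h (x,y) 0 1
          = (2 * a22 (x, y + h/2) + (a12 (x - h/2, y + h) + a12 (x, y + h/2))) / (2*h^2) := by
        norm_num [negStencilCoef, diagCoef, mixedNegCoef]
        field_simp
      rw [heq]
      exact pair _ _ _ (memP _ _ (by linarith) (by linarith) (by linarith) (by linarith))
        (memP _ _ (by linarith) (by linarith) (by linarith) (by linarith))
        (hdist _ _ _ _ (by rw [abs_le]; constructor <;> linarith)
          (by rw [abs_le]; constructor <;> linarith)) (min_le_right _ _)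
    · -- (1,-1)
      have heq : negStencilCoef a11 a22 a12 a h (x,y) 1 (-1)
          = -(a12 (x + h, y - h/2) + a12 (x + h/2, y - h)) / (2*h^2) := by
        norm_num [negStencilCoef, diagCoef, mixedNegCoef]
      rw [heq]
      have n1 := ha12neg _ (memP (x + h) (y - h/2) (by linarith) (by linarith) (by linarith) (by linarith))
      have n2 := ha12neg _ (memP (x + h/2) (y - h) (by linarith) (by linarith) (by linarith) (by linarith))
      apply div_nonneg (by linarith) (by positivity)
    · -- (1,0)
      have heq : negStencilCoef a11 a22 a12 a h (x,y) 1 0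
          = (2 * a11 (x + h/2, y) + (a12 (x + h, y - h/2) + a12 (x + h/2, y))) / (2*h^2) := by
        norm_num [negStencilCoef, diagCoef, mixedNegCoef]
        field_simp
      rw [heq]
      exact pair _ _ _ (memP _ _ (by linarith) (by linarith) (by linarith) (by linarith))
        (memP _ _ (by linarith) (by linarith) (by linarith) (by linarith))
        (hdist _ _ _ _ (by rw [abs_le]; constructor <;> linarith)
          (by rw [abs_le]; constructor <;> linarith)) (min_le_left _ _)
    · -- (1,1)
      norm_num [negStencilCoef, diagCoef, mixedNegCoef]
  · -- center negativity
    have pair11 : ∀ w ∈ Q2, 0 < 2 * a11 w + a12 w := by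
      intro w hw
      have h1 := hdom w hw
      have h2 := min_le_left (a11 w) (a22 w)
      have h3 := neg_abs_le (a12 w)
      have h4 := ha11pos w hw
      linarith
    have pair22 : ∀ w ∈ Q2, 0 < 2 * a22 w + a12 w := by
      intro w hw
      have h1 := hdom w hw
      have h2 := min_le_right (a11 w) (a22 w)
      have h3 := neg_abs_le (a12 w)
      have h4 := ha22pos w hw
      linarith
    have heq : negStencilCoef a11 a22 a12 a h (x,y) 0 0
        = -((2 * a11 (x - h/2, y) + a12 (x - h/2, y)) + (2 * a11 (x + h/2, y) + a12 (x + h/2, y))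
            + (2 * a22 (x, y - h/2) + a12 (x, y - h/2)) + (2 * a22 (x, y + h/2) + a12 (x, y + h/2))
            + 2 * h^2 * a (x, y)) / (2 * h^2) := by
      norm_num [negStencilCoef, diagCoef, mixedNegCoef]
      field_simp
      ring
    rw [heq]
    have p1 := pair11 _ (memP (x - h/2) y (by linarith) (by linarith) (by linarith) (by linarith))
    have p2 := pair11 _ (memP (x + h/2) y (by linarith) (by linarith) (by linarith) (by linarith))
    have p3 := pair22 _ (memP x (y - h/2) (by linarith) (by linarith) (by linarith) (by linarith))
    have p4 := pair22 _ (memP x (y + h/2) (by linarith) (by linarith) (by linarith) (by linarith))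
    have p5 : 0 ≤ 2 * h^2 * a (x, y) := by
      have := ha0 _ (memP x y (by linarith) (by linarith) (by linarith) (by linarith))
      positivity
    apply div_neg_of_neg_of_pos (by linarith) (by positivity)

/-- Sign structure of the stencil of `L_h⁰ + L_h⁻` under the hypotheses `a₁₁, a₂₂ > 0`,
`a ≥ 0`, `a₁₂ < 0` and `|a₁₂| < min(a₁₁, a₂₂)`: for all sufficiently small `h`, the
off-center coefficients are nonnegative and the center coefficient is negative. The first
conjunct records that `c_{p,q}` is indeed the coefficient family representing the combined
operator. -/
theorem stmt7 (a11 a22 a12 a : ℝ × ℝ → ℝ)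
    (ha11 : ContinuousOn a11 Q2) (ha22 : ContinuousOn a22 Q2)
    (ha12 : ContinuousOn a12 Q2) (ha : ContinuousOn a Q2)
    (ha11pos : ∀ z ∈ Q2, 0 < a11 z) (ha22pos : ∀ z ∈ Q2, 0 < a22 z)
    (ha0 : ∀ z ∈ Q2, 0 ≤ a z) (ha12neg : ∀ z ∈ Q2, a12 z < 0)
    (hdom : ∀ z ∈ Q2, |a12 z| < min (a11 z) (a22 z)) :
    ∃ h₀ > (0 : ℝ), ∀ N : ℕ, Even N → 4 ≤ N → 2 / (N : ℝ) < h₀ →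
      ∀ i j : ℕ, 1 ≤ i → i ≤ N - 1 → 1 ≤ j → j ≤ N - 1 →
        (∀ v : ℝ × ℝ → ℝ,
          Lh0 a11 a22 a (2 / (N : ℝ)) v (nodePt N i j)
              + Lhm a12 (2 / (N : ℝ)) v (nodePt N i j)
            = ∑ p ∈ Finset.Icc (-1 : ℤ) 1, ∑ q ∈ Finset.Icc (-1 : ℤ) 1,
                negStencilCoef a11 a22 a12 a (2 / (N : ℝ)) (nodePt N i j) p q
                  * v (shiftPt (nodePt N i j) (2 / (N : ℝ)) p q)) ∧
        (∀ p ∈ Finset.Icc (-1 : ℤ) 1, ∀ q ∈ Finset.Icc (-1 : ℤ) 1, ¬(p = 0 ∧ q = 0) →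
          0 ≤ negStencilCoef a11 a22 a12 a (2 / (N : ℝ)) (nodePt N i j) p q) ∧
        negStencilCoef a11 a22 a12 a (2 / (N : ℝ)) (nodePt N i j) 0 0 < 0 := by
  have hQc : IsCompact Q2 := isCompact_Icc
  have hQne : Q2.Nonempty := ⟨((-1:ℝ),(-1:ℝ)), memQ2' le_rfl (by norm_num) le_rfl (by norm_num)⟩
  have hg : ContinuousOn (fun z => min (a11 z) (a22 z) + a12 z) Q2 :=
    (ContinuousOn.inf ha11 ha22).add ha12
  obtain ⟨z₀, hz₀, hz₀min'⟩ := hQc.exists_isMinOn hQne hg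
  have hz₀min : ∀ z ∈ Q2, min (a11 z₀) (a22 z₀) + a12 z₀ ≤ min (a11 z) (a22 z) + a12 z :=
    fun z hz => hz₀min' hz
  have hεpos : 0 < min (a11 z₀) (a22 z₀) + a12 z₀ := by
    have h1 := hdom z₀ hz₀
    have h2 := ha12neg z₀ hz₀
    rw [abs_of_neg h2] at h1
    linarith
  obtain ⟨δ, hδpos, hδ⟩ := Metric.uniformContinuousOn_iff.mp
    (hQc.uniformContinuousOn_of_continuous ha12) _ hεpos
  refine ⟨δ, hδpos, ?_⟩
  intro N hNeven hN4 hNδ i j hi1 hiN hj1 hjN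
  have hN0 : (0:ℝ) < N := by
    have : (4:ℝ) ≤ N := by exact_mod_cast hN4
    linarith
  have hh : 0 < 2 / (N : ℝ) := div_pos two_pos hN0
  have hNh : (N:ℝ) * (2 / (N : ℝ)) = 2 := by field_simp
  have hi' : (i:ℝ) + 1 ≤ N := by exact_mod_cast (by omega : i + 1 ≤ N)
  have hi'' : (1:ℝ) ≤ i := by exact_mod_cast hi1
  have hj' : (j:ℝ) + 1 ≤ N := by exact_mod_cast (by omega : j + 1 ≤ N)
  have hj'' : (1:ℝ) ≤ j := by exact_mod_cast hj1
  have hnode : nodePt N i j = (-1 + i * (2 / (N : ℝ)), -1 + j * (2 / (N : ℝ))) := rfl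
  have hx1 : -1 ≤ (-1 + i * (2 / (N : ℝ))) - 2 / (N : ℝ) := by
    have : (2 / (N : ℝ)) * 1 ≤ (2 / (N : ℝ)) * i :=
      mul_le_mul_of_nonneg_left hi'' (le_of_lt hh)
    nlinarith
  have hx2 : (-1 + i * (2 / (N : ℝ))) + 2 / (N : ℝ) ≤ 1 := by
    have : ((i:ℝ) + 1) * (2 / (N : ℝ)) ≤ (N:ℝ) * (2 / (N : ℝ)) :=
      mul_le_mul_of_nonneg_right hi' (le_of_lt hh)
    nlinarith
  have hy1 : -1 ≤ (-1 + j * (2 / (N : ℝ))) - 2 / (N : ℝ) := by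
    have : (2 / (N : ℝ)) * 1 ≤ (2 / (N : ℝ)) * j :=
      mul_le_mul_of_nonneg_left hj'' (le_of_lt hh)
    nlinarith
  have hy2 : (-1 + j * (2 / (N : ℝ))) + 2 / (N : ℝ) ≤ 1 := by
    have : ((j:ℝ) + 1) * (2 / (N : ℝ)) ≤ (N:ℝ) * (2 / (N : ℝ)) :=
      mul_le_mul_of_nonneg_right hj' (le_of_lt hh)
    nlinarith
  have hδ' : ∀ z ∈ Q2, ∀ w ∈ Q2, dist z w < δ →
      |a12 z - a12 w| < min (a11 z₀) (a22 z₀) + a12 z₀ := by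
    intro z hz w hw hzw
    have := hδ z hz w hw hzw
    rwa [Real.dist_eq] at this
  obtain ⟨hsigns, hcenter⟩ := node_signs a11 a22 a12 a ha11pos ha22pos ha0 ha12neg hdom
    (2 / (N : ℝ)) δ _ hh hNδ hz₀min hδ' _ _ hx1 hx2 hy1 hy2
  rw [hnode]
  exact ⟨fun v => stencil_repr a11 a22 a12 a _ _ v, hsigns, hcenter⟩
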